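/- arXiv:1903.07523 — 4 statements merged into one kernel-verified Lean document; each statement's English description precedes it below -/
import Mathlib

section
/- Let r ≥ 3 and u, v positive integers with (r - 1/(r-1))·u < v < ((r + √(r²-4))/2)·u. Then there exists a positive integer l such that the pair (u_l, v_l)ᵗ := Φ^l (u,v)ᵗ, where Φ = [[r²-1,-r],[r,-1]], consists of positive integers and satisfies u_l < v_l ≤ (r - 1/(r-1))·u_l. -/
open Matrix

private lemma phi_mulVec (r u v : ℤ) :
    (!![r ^ 2 - 1, -r; r, -1] : Matrix (Fin 2) (Fin 2) ℤ).mulVec ![u, v] =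
      ![(r ^ 2 - 1) * u - r * v, r * u - v] := by
  funext i; fin_cases i <;> simp [Matrix.mulVec, dotProduct, Fin.sum_univ_two] <;> ring

private lemma stmt9_aux (r : ℤ) (hr : 3 ≤ r) : ∀ n : ℕ, ∀ u v : ℤ, u.natAbs ≤ n →
    0 < u → 0 < v → u * (r * (r - 1) - 1) < v * (r - 1) → u ^ 2 + v ^ 2 < r * u * v →
    ∃ l : ℕ, 0 < l ∧
      (0 < ((!![r ^ 2 - 1, -r; r, -1] : Matrix (Fin 2) (Fin 2) ℤ) ^ l).mulVec ![u, v] 0) ∧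
      (0 < ((!![r ^ 2 - 1, -r; r, -1] : Matrix (Fin 2) (Fin 2) ℤ) ^ l).mulVec ![u, v] 1) ∧
      (((!![r ^ 2 - 1, -r; r, -1] : Matrix (Fin 2) (Fin 2) ℤ) ^ l).mulVec ![u, v] 0 <
        ((!![r ^ 2 - 1, -r; r, -1] : Matrix (Fin 2) (Fin 2) ℤ) ^ l).mulVec ![u, v] 1) ∧
      (((!![r ^ 2 - 1, -r; r, -1] : Matrix (Fin 2) (Fin 2) ℤ) ^ l).mulVec ![u, v] 1 * (r - 1) ≤
        ((!![r ^ 2 - 1, -r; r, -1] : Matrix (Fin 2) (Fin 2) ℤ) ^ l).mulVec ![u, v] 0 *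
          (r * (r - 1) - 1)) := by
  intro n
  induction n with
  | zero =>
    intro u v hn hu _ _ _
    omega
  | succ n ih =>
    intro u v hn hu hv h1 hq
    set u' : ℤ := (r ^ 2 - 1) * u - r * v with hu'def
    set v' : ℤ := r * u - v with hv'def
    -- v < r * u
    have hvru : v < r * u := by nlinarith [sq_nonneg (v - r * u), sq_nonneg u]
    -- 0 < u'
    have hu' : 0 < u' := by
      by_contra h
      push_neg at h
      have hp : 0 ≤ r * v * (r * v - (r ^ 2 - 1) * u) := by
        have : 0 ≤ r * v - (r ^ 2 - 1) * u := by simp only [hu'def] at h; linarith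
        have hrv : 0 < r * v := by positivity
        positivity
      nlinarith [mul_pos (mul_pos (by linarith : (0:ℤ) < r) hu) (by linarith : 0 < r * u - v)]
    have hv' : 0 < v' := by simp only [hv'def]; linarith
    have hlt : u' < v' := by simp only [hu'def, hv'def]; nlinarith
    have hq' : u' ^ 2 + v' ^ 2 < r * u' * v' := by simp only [hu'def, hv'def]; nlinarith
    have hudec : u' < u := by
      have h1r : r * (u * (r * (r - 1) - 1)) < r * (v * (r - 1)) :=
        mul_lt_mul_of_pos_left h1 (by linarith)
      have : (r - 1) * u' < u := by simp only [hu'def]; nlinarith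
      nlinarith
    have key : ∀ l : ℕ,
        ((!![r ^ 2 - 1, -r; r, -1] : Matrix (Fin 2) (Fin 2) ℤ) ^ (l + 1)).mulVec ![u, v] =
        ((!![r ^ 2 - 1, -r; r, -1] : Matrix (Fin 2) (Fin 2) ℤ) ^ l).mulVec ![u', v'] := by
      intro l
      rw [pow_succ, ← Matrix.mulVec_mulVec, phi_mulVec]
    by_cases hc : u' * (r * (r - 1) - 1) < v' * (r - 1)
    · have hn' : u'.natAbs ≤ n := by omega
      obtain ⟨l, hl, c1, c2, c3, c4⟩ := ih u' v' hn' hu' hv' hc hq'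
      exact ⟨l + 1, by omega, by rw [key]; exact c1, by rw [key]; exact c2,
        by rw [key]; exact c3, by rw [key]; exact c4⟩
    · push_neg at hc
      refine ⟨1, one_pos, ?_, ?_, ?_, ?_⟩ <;>
        simp only [pow_one, phi_mulVec, Matrix.cons_val_zero, Matrix.cons_val_one,
          Matrix.head_cons]
      · exact hu'
      · exact hv'
      · exact hlt
      · exact hc

open Matrix in
/-- For `r ≥ 3` and positive integers `u, v` with
`(r - 1/(r-1))·u < v < ((r + √(r²-4))/2)·u`, some power `Φ^l` (`l ≥ 1`) of the
Coxeter matrix `Φ = [[r²-1,-r],[r,-1]]` takes `(u,v)` to a pair `(u_l, v_l)` of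
positive integers with `u_l < v_l ≤ (r - 1/(r-1))·u_l`. -/
theorem stmt9 (r u v : ℤ) (hr : 3 ≤ r) (hu : 0 < u) (hv : 0 < v)
    (h1 : u * (r * (r - 1) - 1) < v * (r - 1))
    (h2 : (v : ℝ) < (((r : ℝ) + Real.sqrt ((r : ℝ) ^ 2 - 4)) / 2) * u) :
    ∃ l : ℕ, 0 < l ∧
      (0 < ((!![r ^ 2 - 1, -r; r, -1] : Matrix (Fin 2) (Fin 2) ℤ) ^ l).mulVec ![u, v] 0) ∧
      (0 < ((!![r ^ 2 - 1, -r; r, -1] : Matrix (Fin 2) (Fin 2) ℤ) ^ l).mulVec ![u, v] 1) ∧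
      (((!![r ^ 2 - 1, -r; r, -1] : Matrix (Fin 2) (Fin 2) ℤ) ^ l).mulVec ![u, v] 0 <
        ((!![r ^ 2 - 1, -r; r, -1] : Matrix (Fin 2) (Fin 2) ℤ) ^ l).mulVec ![u, v] 1) ∧
      (((!![r ^ 2 - 1, -r; r, -1] : Matrix (Fin 2) (Fin 2) ℤ) ^ l).mulVec ![u, v] 1 * (r - 1) ≤
        ((!![r ^ 2 - 1, -r; r, -1] : Matrix (Fin 2) (Fin 2) ℤ) ^ l).mulVec ![u, v] 0 *
          (r * (r - 1) - 1)) := by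
  have huv : u < v := by
    by_contra h
    push_neg at h
    have h2' : v * (r - 1) ≤ u * (r - 1) := by
      have : (0:ℤ) ≤ r - 1 := by linarith
      exact mul_le_mul_of_nonneg_right h this
    nlinarith [mul_pos hu (show (0:ℤ) < r * (r - 2) by nlinarith)]
  -- derive the quadratic form inequality from h2
  have hq : u ^ 2 + v ^ 2 < r * u * v := by
    set s : ℝ := Real.sqrt ((r : ℝ) ^ 2 - 4) with hs
    have hr3 : (3 : ℝ) ≤ (r : ℝ) := by exact_mod_cast hr
    have hs2 : s ^ 2 = (r : ℝ) ^ 2 - 4 := Real.sq_sqrt (by nlinarith)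
    have hsnn : 0 ≤ s := Real.sqrt_nonneg _
    have hsgt : (r : ℝ) - 2 < s := by nlinarith
    have huR : (0 : ℝ) < (u : ℝ) := by exact_mod_cast hu
    have huvR : (u : ℝ) < (v : ℝ) := by exact_mod_cast huv
    have hupper : 2 * (v : ℝ) - (r : ℝ) * u < s * u := by nlinarith
    have hlower : -(s * u) < 2 * (v : ℝ) - (r : ℝ) * u := by nlinarith
    have hsq : (2 * (v : ℝ) - (r : ℝ) * u) ^ 2 < ((r : ℝ) ^ 2 - 4) * u ^ 2 := by
      nlinarith [mul_pos (by linarith : (0:ℝ) < s * u - (2 * (v : ℝ) - (r : ℝ) * u))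
        (by linarith : (0:ℝ) < s * u + (2 * (v : ℝ) - (r : ℝ) * u))]
    have hsqZ : (2 * v - r * u) ^ 2 < (r ^ 2 - 4) * u ^ 2 := by exact_mod_cast hsq
    nlinarith
  exact stmt9_aux r hr u.natAbs u v le_rfl hu hv h1 hq
end

section
/- Let a', b' be positive integers with b' - a' ≥ r - 1 and r ≥ 2. For 1 ≤ l ≤ b' - a' + 1 let I(l) be the b' × a' matrix whose rows l, l+1, ..., l+a'-1 form the a' × a' identity matrix and whose other rows are zero. Fix an injective map φ : {1,...,r} → {1,...,b'-a'+1}. Then for every α ∈ k^r with α ≠ 0, the matrix Σ_{i=1}^r α_i · I(φ(i)) has rank a' (i.e. defines an injective linear map k^{a'} → k^{b'}). -/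
open Polynomial


/-- With `I(l)` the `b' × a'` matrix whose rows `l, …, l+a'-1`
(0-indexed shift `l`, `0 ≤ l ≤ b'-a'`) form the identity and all other rows
zero, and `φ` injective, for every nonzero `α ∈ k^r` the matrix
`Σ αᵢ • I(φ i)` defines an injective linear map `k^{a'} → k^{b'}`. -/
theorem stmt12 (k : Type*) [Field k] (r a' b' : ℕ) (hr : 2 ≤ r)
    (ha : 0 < a') (hab : a' + (r - 1) ≤ b')
    (φ : Fin r → Fin (b' - a' + 1)) (hφ : Function.Injective φ)
    (α : Fin r → k) (hα : α ≠ 0) :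
    Function.Injective
      ((∑ i, α i • (Matrix.of fun (x : Fin b') (y : Fin a') =>
        if (x : ℕ) = (φ i : ℕ) + (y : ℕ) then (1 : k) else 0)).mulVec) := by
  set M : Matrix (Fin b') (Fin a') k :=
    ∑ i, α i • (Matrix.of fun (x : Fin b') (y : Fin a') =>
        if (x : ℕ) = (φ i : ℕ) + (y : ℕ) then (1 : k) else 0) with hM
  have hlt : ∀ (i : Fin r) (y : Fin a'), (φ i : ℕ) + (y : ℕ) < b' := by
    intro i y
    have h1 := (φ i).isLt
    have h2 := y.isLt
    omega
  have key : ∀ v : Fin a' → k, M.mulVec v = 0 → v = 0 := by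
    intro v hv
    set Q : k[X] := ∑ i, C (α i) * X ^ (φ i : ℕ) with hQ
    set P : k[X] := ∑ y : Fin a', C (v y) * X ^ (y : ℕ) with hP
    have hQP : Q * P = ∑ x : Fin b', C (M.mulVec v x) * X ^ (x : ℕ) := by
      have hmv : ∀ x : Fin b', M.mulVec v x
          = ∑ i, ∑ y : Fin a', (if (x : ℕ) = (φ i : ℕ) + (y : ℕ) then α i * v y else 0) := by
        intro x
        rw [Finset.sum_comm]
        simp [hM, Matrix.mulVec, dotProduct, Matrix.sum_apply, Finset.sum_mul,
          mul_assoc, ite_mul, zero_mul, mul_ite, mul_zero, mul_comm, Finset.mul_sum]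
      simp only [hmv, map_sum, apply_ite C, map_zero, Finset.sum_mul, ite_mul, zero_mul]
      conv_rhs => rw [Finset.sum_comm]
      rw [hQ, Finset.sum_mul]
      refine Finset.sum_congr rfl fun i _ => ?_
      rw [hP, Finset.mul_sum]
      conv_rhs => rw [Finset.sum_comm]
      refine Finset.sum_congr rfl fun y _ => ?_
      have hilt := hlt i y
      have : ∀ x : Fin b', ((x : ℕ) = (φ i : ℕ) + (y : ℕ)) ↔ (x = ⟨(φ i : ℕ) + (y : ℕ), hilt⟩) := by
        intro x; rw [Fin.ext_iff]
      simp only [mul_ite, mul_one, mul_zero, this, apply_ite C, map_zero, ite_mul, zero_mul,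
        map_mul]
      rw [Finset.sum_ite_eq' Finset.univ (⟨(φ i : ℕ) + (y : ℕ), hilt⟩ : Fin b')]
      simp only [Finset.mem_univ, if_true, map_mul]
      ring
    rw [hv] at hQP
    simp only [Pi.zero_apply, map_zero, zero_mul, Finset.sum_const_zero] at hQP
    have hQne : Q ≠ 0 := by
      obtain ⟨i₀, hi₀⟩ : ∃ i, α i ≠ 0 := by
        by_contra h; push_neg at h; exact hα (funext fun i => h i)
      intro h
      have := congrArg (fun p => coeff p (φ i₀ : ℕ)) h
      simp only [hQ, finset_sum_coeff, coeff_C_mul, coeff_X_pow, coeff_zero] at this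
      rw [Finset.sum_eq_single i₀] at this
      · simp at this; exact hi₀ this
      · intro b _ hb
        have : (φ b : ℕ) ≠ (φ i₀ : ℕ) := fun h => hb (hφ (Fin.ext h))
        rw [if_neg (Ne.symm this), mul_zero]
      · simp
    have hPzero : P = 0 := by
      rcases mul_eq_zero.mp hQP with h | h
      · exact absurd h hQne
      · exact h
    funext y
    have := congrArg (fun p => coeff p (y : ℕ)) hPzero
    simp only [hP, finset_sum_coeff, coeff_C_mul, coeff_X_pow, coeff_zero] at this
    rw [Finset.sum_eq_single y] at this
    · simpa using this
    · intro b _ hb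
      have : (b : ℕ) ≠ (y : ℕ) := fun h => hb (Fin.ext h)
      rw [if_neg (Ne.symm this), mul_zero]
    · simp
  intro u w huw
  have : M.mulVec (u - w) = 0 := by
    rw [Matrix.mulVec_sub, huw, sub_self]
  have := key _ this
  exact sub_eq_zero.mp this
end

section
/- Let r ≥ 2 and let T be a finite source-regular tree (every vertex a source or sink, every source of degree exactly r with all neighbors sinks). Let w : T₀ → ℕ_{≥1} be a weight function such that for each source a and each neighbor b of a, w(a) ≤ w(b). Let m = max{w(a) : a a source}. Then m + (r-1)·Σ_{a source} w(a) ≤ Σ_{b sink} w(b). -/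
/-!
Root the tree at a source `a₀` of maximal weight `m`. Every sink then has a parent, its neighbour
towards `a₀`, which is a source of weight at most its own; and every source has all its neighbours
but its parent as children, i.e. `r - 1` sink children, or `r` for `a₀`. Grouping the sinks by
their parents gives
`Σ_{sinks} w ≥ Σ_{sources a} #children(a) · w(a) = (r - 1) Σ_{sources} w + m`.
-/

open Finset

theorem Finset.sum_nsmul_le_sum_of_le_card_fiber {α M : Type*} [DecidableEq α] [AddCommMonoid M]
    [PartialOrder M] [IsOrderedAddMonoid M] [CanonicallyOrderedAdd M]
    {s t : Finset α} {f : α → α} {w : α → M} {c : α → ℕ}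
    (hf : ∀ b ∈ s, f b ∈ t) (hw : ∀ b ∈ s, w (f b) ≤ w b)
    (hc : ∀ a ∈ t, c a ≤ #{b ∈ s | f b = a}) :
    ∑ a ∈ t, c a • w a ≤ ∑ b ∈ s, w b :=
  calc ∑ a ∈ t, c a • w a
      ≤ ∑ a ∈ t, #{b ∈ s | f b = a} • w a :=
        sum_le_sum fun a ha => nsmul_le_nsmul_left zero_le (hc a ha)
    _ = ∑ b ∈ s, w (f b) := by
        rw [← sum_fiberwise_of_maps_to hf]
        refine sum_congr rfl fun a _ => ?_
        rw [sum_congr rfl fun b hb => congrArg w (mem_filter.1 hb).2, sum_const]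
    _ ≤ ∑ b ∈ s, w b := sum_le_sum hw

namespace SimpleGraph.IsTree

variable {V : Type*} {G : SimpleGraph V} (hG : G.IsTree) (root : V)

noncomputable def parent (v : V) : V :=
  (hG.existsUnique_path root v).choose.penultimate

lemma parent_root : hG.parent root root = root := by
  rw [parent, (hG.existsUnique_path root root).unique (hG.existsUnique_path root root).choose_spec.1
    Walk.IsPath.nil]
  rfl

lemma adj_parent {v : V} (hv : v ≠ root) : G.Adj v (hG.parent root v) :=
  (Walk.adj_penultimate (Walk.not_nil_of_ne hv.symm)).symm

lemma eq_parent_or_eq_parent_of_adj {v w : V} (h : G.Adj v w) :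
    w = hG.parent root v ∨ v = hG.parent root w := by
  have hp := (hG.existsUnique_path root v).choose_spec.1
  have hq := (hG.existsUnique_path root w).choose_spec.1
  by_cases hv : v ∈ (hG.existsUnique_path root w).choose.support
  · exact .inr (hG.isAcyclic.eq_penultimate_of_adj_end hq h.symm hv)
  · exact .inl (hG.isAcyclic.eq_penultimate_of_adj_end hp h
      (hG.isAcyclic.mem_support_of_ne_mem_support_of_adj_of_isPath hp hq h hv))

variable [DecidableEq V] [G.LocallyFinite]

noncomputable def children (a : V) : Finset V := (G.neighborFinset a).erase (hG.parent root a)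

lemma card_children_root : #(hG.children root root) = G.degree root := by
  rw [children, parent_root, erase_eq_of_notMem (by simp), card_neighborFinset_eq_degree]

lemma card_children_of_ne {a : V} (ha : a ≠ root) : #(hG.children root a) = G.degree a - 1 := by
  rw [children, card_erase_of_mem ((mem_neighborFinset _ _ _).2 (hG.adj_parent root ha)),
    card_neighborFinset_eq_degree]

lemma adj_of_mem_children {a b : V} (hb : b ∈ hG.children root a) : G.Adj a b :=
  (G.mem_neighborFinset a b).1 (mem_of_mem_erase hb)

lemma parent_eq_of_mem_children {a b : V} (hb : b ∈ hG.children root a) :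
    hG.parent root b = a :=
  ((hG.eq_parent_or_eq_parent_of_adj root (hG.adj_of_mem_children root hb)).resolve_left
    (ne_of_mem_erase hb)).symm

end SimpleGraph.IsTree

theorem stmt14_general (r : ℕ) (hr : 2 ≤ r) (V : Type*) [Fintype V] [DecidableEq V]
    (G : SimpleGraph V) [DecidableRel G.Adj] (hT : G.IsTree)
    (src : V → Bool)
    (hedge : ∀ u v, G.Adj u v → (src u = true ↔ src v = false))
    (hdeg : ∀ v, src v = true → G.degree v = r)
    (w : V → ℕ)
    (hmono : ∀ u v, G.Adj u v → src u = true → w u ≤ w v)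
    (m : ℕ)
    (hm2 : ∃ v, src v = true ∧ w v = m) :
    m + (r - 1) * (∑ v ∈ Finset.univ.filter fun v => src v = true, w v) ≤
      ∑ v ∈ Finset.univ.filter fun v => src v = false, w v := by
  obtain ⟨root, hroot, rfl⟩ := hm2
  have hparent {b : V} (hb : src b = false) :
      G.Adj (hT.parent root b) b ∧ src (hT.parent root b) = true := by
    have hadj := (hT.adj_parent root (v := b) (by rintro rfl; simp [hroot] at hb)).symm
    exact ⟨hadj, (hedge _ _ hadj).2 hb⟩
  have hchildren {a : V} (ha : src a = true) :
      r - 1 + (if a = root then 1 else 0) ≤ #{b | src b = false ∧ hT.parent root b = a} := by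
    calc r - 1 + (if a = root then 1 else 0) = #(hT.children root a) := by
          split_ifs with h
          · rw [h, hT.card_children_root, hdeg root hroot]; omega
          · rw [hT.card_children_of_ne root h, hdeg a ha, add_zero]
      _ ≤ _ := card_le_card fun b hb => mem_filter.2 ⟨mem_univ b,
          (hedge _ _ (hT.adj_of_mem_children root hb)).1 ha, hT.parent_eq_of_mem_children root hb⟩
  calc w root + (r - 1) * ∑ v with src v = true, w v
      = ∑ a with src a = true, (r - 1 + if a = root then 1 else 0) • w a := by
        simp only [smul_eq_mul, add_mul, sum_add_distrib, ← mul_sum, ite_mul, one_mul, zero_mul,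
          sum_ite_eq', mem_filter, mem_univ, true_and, hroot, if_true, add_comm]
    _ ≤ ∑ b with src b = false, w b := by
        refine sum_nsmul_le_sum_of_le_card_fiber (f := hT.parent root)
          (fun b hb => ?_) (fun b hb => ?_) fun a ha => ?_
        · simpa using (hparent (mem_filter.1 hb).2).2
        · obtain ⟨hadj, hsrc⟩ := hparent (mem_filter.1 hb).2
          exact hmono _ _ hadj hsrc
        · rw [filter_filter]; exact hchildren (mem_filter.1 ha).2

/-- In a finite source-regular tree with positive integer
weights `w` that are nondecreasing from each source to its neighbours, with
`m` the maximal weight of a source,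
`m + (r-1) * Σ_{sources} w ≤ Σ_{sinks} w`. -/
theorem stmt14 (r : ℕ) (hr : 2 ≤ r) (V : Type*) [Fintype V] [DecidableEq V]
    (G : SimpleGraph V) [DecidableRel G.Adj] (hT : G.IsTree)
    (src : V → Bool)
    (hedge : ∀ u v, G.Adj u v → (src u = true ↔ src v = false))
    (hdeg : ∀ v, src v = true → G.degree v = r)
    (w : V → ℕ) (hw : ∀ v, 1 ≤ w v)
    (hmono : ∀ u v, G.Adj u v → src u = true → w u ≤ w v)
    (m : ℕ) (hm1 : ∀ v, src v = true → w v ≤ m)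
    (hm2 : ∃ v, src v = true ∧ w v = m) :
    m + (r - 1) * (∑ v ∈ Finset.univ.filter fun v => src v = true, w v) ≤
      ∑ v ∈ Finset.univ.filter fun v => src v = false, w v :=
  stmt14_general r hr V G hT src hedge hdeg w hmono m hm2
end

section
/- Let r ≥ 3. If nonnegative integers d_N, c_N with (c_N, d_N) ≠ (0,0) satisfy q_{r-1}(d_N, d_N + c_N) < 1 where q_s(x,y) = x² + y² - sxy, and if d_M ≥ d_N ≥ 1 and c_M ≤ c_N are nonnegative integers, then q_r(d_M, d_M + c_M) < 1. -/
/-- If `q_{r-1}(d_N, d_N + c_N) < 1` with `(c_N, d_N) ≠ (0,0)`,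
`d_M ≥ d_N ≥ 1` and `c_M ≤ c_N`, then `q_r(d_M, d_M + c_M) < 1`. -/
theorem stmt16 (r dN cN dM cM : ℕ) (hr : 3 ≤ r) (hne : (cN, dN) ≠ (0, 0))
    (h : (dN : ℤ) ^ 2 + ((dN : ℤ) + cN) ^ 2 - ((r : ℤ) - 1) * dN * ((dN : ℤ) + cN) < 1)
    (hd1 : 1 ≤ dN) (hd : dN ≤ dM) (hc : cM ≤ cN) :
    (dM : ℤ) ^ 2 + ((dM : ℤ) + cM) ^ 2 - (r : ℤ) * dM * ((dM : ℤ) + cM) < 1 := by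
  have hr' : (3 : ℤ) ≤ (r : ℤ) := by exact_mod_cast hr
  have hd1' : (1 : ℤ) ≤ (dN : ℤ) := by exact_mod_cast hd1
  have hd' : (dN : ℤ) ≤ (dM : ℤ) := by exact_mod_cast hd
  have hc' : (cM : ℤ) ≤ (cN : ℤ) := by exact_mod_cast hc
  have hcM : (0 : ℤ) ≤ (cM : ℤ) := Int.ofNat_nonneg _
  have hdM : (1 : ℤ) ≤ (dM : ℤ) := le_trans hd1' hd'
  -- hypothesis in integer ≤ 0 form
  have H : (cN : ℤ) ^ 2 ≤ ((r : ℤ) - 3) * ((dN : ℤ) * cN + (dN : ℤ) ^ 2) := by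
    nlinarith [h]
  -- abbreviations
  have hAB : (cM : ℤ) * dN ≤ (cN : ℤ) * dM :=
    mul_le_mul hc' hd' (by linarith) (by positivity)
  have key : (cM : ℤ) ^ 2 * dN ^ 2 ≤
      ((r : ℤ) - 2) * ((dM : ℤ) * dN) * ((cM : ℤ) * dN)
        + ((r : ℤ) - 2) * (dM : ℤ) ^ 2 * (dN : ℤ) ^ 2 := by
    rcases le_or_gt ((cM : ℤ) * dN) (((r : ℤ) - 2) * ((dM : ℤ) * dN)) with hcase | hcase
    · nlinarith [mul_nonneg hcM (le_trans zero_le_one hd1'),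
        mul_le_mul_of_nonneg_left hcase (mul_nonneg hcM (le_trans zero_le_one hd1')),
        mul_pos (lt_of_lt_of_le zero_lt_one hdM) (lt_of_lt_of_le zero_lt_one hd1')]
    · have HB : (cN : ℤ) ^ 2 * dM ^ 2 ≤
          ((r : ℤ) - 3) * ((dN : ℤ) * cN + (dN : ℤ) ^ 2) * dM ^ 2 :=
        mul_le_mul_of_nonneg_right H (by positivity)
      nlinarith [mul_le_mul hAB hAB (by positivity) (by positivity),
        mul_nonneg (sub_nonneg.mpr hAB) (le_of_lt (sub_pos.mpr hcase)),
        mul_pos (lt_of_lt_of_le zero_lt_one hdM) (lt_of_lt_of_le zero_lt_one hd1'),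
        sq_nonneg ((dM : ℤ) * dN)]
  have hdN2 : (1 : ℤ) ≤ (dN : ℤ) ^ 2 := by nlinarith
  nlinarith [key, mul_pos (lt_of_lt_of_le zero_lt_one hdM) (lt_of_lt_of_le zero_lt_one hd1'),
    mul_nonneg hcM (le_trans zero_le_one hd1'), sq_nonneg ((dN : ℤ) - 1)]
end
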